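/- Let ν be a Lévy measure on ℝ^d, D ⊂ ℝ^d open, and u ∈ 𝒯_ν(D) ∩ L¹_loc(D), where 𝒯_ν(D) is the space of functions integrable against ρ_F(x) := ν(B_{r_F}^c ∩ (F − x)) + ν(B_{r_F}^c ∩ (x − F)) for every compact F ⊂ D, with r_F := (2 dist(F, D^c)) ∧ 1. Then for every η ∈ C_c²(D), ∫_{ℝ^d} |u| · |Aη| < ∞, where A is a Lévy operator with Lévy measure ν. -/

import Mathlib

open MeasureTheory Set Metric Classical
open scoped ENNReal

variable {d : ℕ}

local notation "E" => EuclideanSpace ℝ (Fin d)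

/-- `r_F := (2 dist(F, Vᶜ)) ∧ 1`. -/
noncomputable def rF (V F : Set (EuclideanSpace ℝ (Fin d))) : ℝ :=
  min (2 * sInf ((fun z => Metric.infDist z Vᶜ) '' F)) 1

/-- `ρ_F(x) := ν(B_{r_F}ᶜ ∩ (F − x)) + ν(B_{r_F}ᶜ ∩ (x − F))`. -/
noncomputable def rhoF (ν : Measure (EuclideanSpace ℝ (Fin d)))
    (V F : Set (EuclideanSpace ℝ (Fin d))) (x : EuclideanSpace ℝ (Fin d)) : ℝ :=
  (ν ((Metric.ball (0 : EuclideanSpace ℝ (Fin d)) (rF V F))ᶜ ∩ ((fun z => z - x) '' F))).toReal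
    + (ν ((Metric.ball (0 : EuclideanSpace ℝ (Fin d)) (rF V F))ᶜ ∩ ((fun z => x - z) '' F))).toReal

/-- The Lévy operator with triplet `(l, Q, ν)`:
`Aη(x) = (1/2) Tr(Q D²η(x)) − l·∇η(x) + ∫ (η(x+y) − η(x) − y·∇η(x) 1_{B(0,1)}(y)) ν(dy)`. -/
noncomputable def levyOp (Q : Matrix (Fin d) (Fin d) ℝ) (l : EuclideanSpace ℝ (Fin d))
    (ν : Measure (EuclideanSpace ℝ (Fin d))) (η : EuclideanSpace ℝ (Fin d) → ℝ)
    (x : EuclideanSpace ℝ (Fin d)) : ℝ :=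
  (1 / 2) * ∑ i, ∑ k, Q i k *
      fderiv ℝ (fun z => fderiv ℝ η z (EuclideanSpace.single k 1)) x (EuclideanSpace.single i 1)
    - inner (𝕜 := ℝ) l (gradient η x)
    + ∫ y, (η (x + y) - η x -
        (if y ∈ Metric.ball (0 : EuclideanSpace ℝ (Fin d)) 1 then
          inner (𝕜 := ℝ) y (gradient η x) else 0)) ∂ν

/-- A continuous compactly supported function is globally bounded. -/
lemma aux_bdd {G : Type*} [NormedAddCommGroup G] {g : EuclideanSpace ℝ (Fin d) → G}
    (hg : Continuous g) (hsupp : HasCompactSupport g) :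
    ∃ M : ℝ, 0 ≤ M ∧ ∀ x, ‖g x‖ ≤ M := by
  obtain ⟨M, hM⟩ := hsupp.exists_bound_of_continuousOn hg.continuousOn
  refine ⟨max M 0, le_max_right _ _, fun x => ?_⟩
  by_cases hx : x ∈ tsupport g
  · exact (hM x hx).trans (le_max_left _ _)
  · rw [image_eq_zero_of_notMem_tsupport hx]; simp

/-- A Lévy measure is finite outside any ball around the origin. -/
lemma aux_nufin (ν : Measure (EuclideanSpace ℝ (Fin d)))
    (hνint : ∫⁻ y, ENNReal.ofReal (min 1 (‖y‖ ^ 2)) ∂ν ≠ ⊤) {t : ℝ} (ht : 0 < t) :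
    ν ((Metric.ball (0 : EuclideanSpace ℝ (Fin d)) t)ᶜ) < ⊤ := by
  set c : ℝ := min 1 (t ^ 2) with hc
  have hcpos : 0 < c := lt_min one_pos (by positivity)
  have hkey : ν ((Metric.ball (0 : EuclideanSpace ℝ (Fin d)) t)ᶜ) * ENNReal.ofReal c
      ≤ ∫⁻ y, ENNReal.ofReal (min 1 (‖y‖ ^ 2)) ∂ν := by
    rw [mul_comm, ← setLIntegral_const]
    calc ∫⁻ _ in (Metric.ball (0 : EuclideanSpace ℝ (Fin d)) t)ᶜ, ENNReal.ofReal c ∂ν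
        ≤ ∫⁻ y in (Metric.ball (0 : EuclideanSpace ℝ (Fin d)) t)ᶜ,
            ENNReal.ofReal (min 1 (‖y‖ ^ 2)) ∂ν := by
          refine setLIntegral_mono ((continuous_const.min
            ((continuous_norm).pow 2)).measurable.ennreal_ofReal) fun y hy => ?_
          refine ENNReal.ofReal_le_ofReal (min_le_min le_rfl ?_)
          have : t ≤ ‖y‖ := by
            by_contra h
            exact hy (mem_ball_zero_iff.mpr (lt_of_not_ge h))
          nlinarith
      _ ≤ ∫⁻ y, ENNReal.ofReal (min 1 (‖y‖ ^ 2)) ∂ν := setLIntegral_le_lintegral _ _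
  by_contra h
  rw [not_lt, top_le_iff] at h
  rw [h, ENNReal.top_mul (ENNReal.ofReal_pos.mpr hcpos).ne'] at hkey
  exact hνint (top_le_iff.mp hkey)

set_option maxHeartbeats 2000000 in
/-- If `u ∈ 𝒯_ν(D) ∩ L¹_loc(D)`, then `∫_{ℝ^d} |u| |Aη| < ∞` for every `η ∈ C_c²(D)`. -/
theorem stmt3 (ν : Measure (EuclideanSpace ℝ (Fin d)))
    (hν0 : ν {0} = 0)
    (hνint : ∫⁻ y, ENNReal.ofReal (min 1 (‖y‖ ^ 2)) ∂ν ≠ ⊤)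
    (D : Set E) (hD : IsOpen D)
    (Q : Matrix (Fin d) (Fin d) ℝ) (hQ : Q.PosSemidef) (l : EuclideanSpace ℝ (Fin d))
    (u : EuclideanSpace ℝ (Fin d) → ℝ) (humeas : Measurable u)
    (huT : ∀ F : Set E, IsCompact F → F ⊆ D →
      Integrable (fun x => |u x| * rhoF ν D F x))
    (huloc : LocallyIntegrableOn u D)
    (η : EuclideanSpace ℝ (Fin d) → ℝ) (hη : ContDiff ℝ 2 η)
    (hηsupp : HasCompactSupport η) (hsuppD : tsupport η ⊆ D) :
    ∫⁻ x, (‖u x‖₊ : ℝ≥0∞) * (‖levyOp Q l ν η x‖₊ : ℝ≥0∞) < ⊤ := by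
  classical
  -- trivial case: η vanishes identically
  by_cases hFne : (tsupport η).Nonempty
  swap
  · have hη0 : η = fun _ => (0 : ℝ) := by
      funext x
      exact image_eq_zero_of_notMem_tsupport (by
        rw [not_nonempty_iff_eq_empty.mp hFne]; exact notMem_empty x)
    have hA0 : ∀ x, levyOp Q l ν η x = 0 := by
      intro x
      rw [hη0]
      simp [levyOp, fderiv_const, gradient_const]
    simp only [hA0]
    simp
  -- setup
  have hF : IsCompact (tsupport η) := hηsupp
  obtain ⟨δ₀, hδ₀pos, hδ₀⟩ := hF.exists_cthickening_subset_open hD hsuppD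
  set s : ℝ := min δ₀ 1 with hs_def
  have hspos : 0 < s := lt_min hδ₀pos one_pos
  have hs1 : s ≤ 1 := min_le_right _ _
  set F' : Set E := cthickening s (tsupport η) with hF'def
  have hF'c : IsCompact F' := hF.cthickening
  have hF'D : F' ⊆ D := (cthickening_mono (min_le_left _ _) _).trans hδ₀
  have hFF' : tsupport η ⊆ F' := self_subset_cthickening _
  -- a point of D whose distance to Dᶜ is at most s/2
  obtain ⟨z₀, hz₀D, hz₀le⟩ : ∃ z₀ ∈ D, infDist z₀ Dᶜ ≤ s / 2 := by
    obtain ⟨z₁, hz₁⟩ := hFne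
    by_cases hDc : Dᶜ = ∅
    · exact ⟨z₁, hsuppD hz₁, by rw [hDc, infDist_empty]; positivity⟩
    · obtain ⟨w, hw⟩ := nonempty_iff_ne_empty.mpr hDc
      by_cases hle : infDist z₁ Dᶜ ≤ s / 2
      · exact ⟨z₁, hsuppD hz₁, hle⟩
      · set γ : ℝ → E := fun t => z₁ + t • (w - z₁) with hγdef
        have hγc : Continuous γ := by
          apply Continuous.add continuous_const
          exact continuous_id.smul continuous_const
        have hfc : Continuous fun t => infDist (γ t) Dᶜ :=
          (continuous_infDist_pt _).comp hγc
        have hγ0 : γ 0 = z₁ := by simp [hγdef]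
        have hγ1 : γ 1 = w := by simp [hγdef]
        have hmem : s / 2 ∈ Icc (infDist (γ 1) Dᶜ) (infDist (γ 0) Dᶜ) := by
          rw [hγ0, hγ1, infDist_zero_of_mem hw]
          exact ⟨by positivity, by linarith [not_le.mp hle]⟩
        obtain ⟨t, _, hval⟩ := intermediate_value_Icc' zero_le_one hfc.continuousOn hmem
        refine ⟨γ t, ?_, hval.le⟩
        by_contra h
        have h0 : infDist (γ t) Dᶜ = 0 := infDist_zero_of_mem h
        have hval' : infDist (γ t) Dᶜ = s / 2 := hval
        rw [h0] at hval'
        linarith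
  set F'' : Set E := F' ∪ {z₀} with hF''def
  have hF''c : IsCompact F'' := hF'c.union isCompact_singleton
  have hF''D : F'' ⊆ D := union_subset hF'D (singleton_subset_iff.mpr hz₀D)
  have hF''closed : IsClosed F'' := hF''c.isClosed
  have hF''meas : MeasurableSet F'' := hF''closed.measurableSet
  have hF''ne : F''.Nonempty := ⟨z₀, Or.inr rfl⟩
  have hFF'' : tsupport η ⊆ F'' := hFF'.trans subset_union_left
  -- rF D F'' ≤ s
  have hrle : rF D F'' ≤ s := by
    have hinner : ∀ z : E, 0 ≤ ⨅ _ : z ∈ F'', infDist z Dᶜ :=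
      fun z => Real.iInf_nonneg fun _ => infDist_nonneg
    have h1 : (⨅ z ∈ F'', infDist z Dᶜ) ≤ infDist z₀ Dᶜ := by
      refine ciInf_le_of_le ⟨0, fun r hr => ?_⟩ z₀ ?_
      · obtain ⟨z, rfl⟩ := hr
        exact hinner z
      · exact ciInf_le_of_le ⟨0, fun r hr => by obtain ⟨_, rfl⟩ := hr; exact infDist_nonneg⟩
          (Or.inr rfl) le_rfl
    calc rF D F'' ≤ 2 * sInf ((fun z => infDist z Dᶜ) '' F'') := min_le_left _ _
      _ ≤ 2 * (s / 2) := by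
          have hz₀F : z₀ ∈ F'' := Or.inr rfl
          have hmemI : infDist z₀ Dᶜ ∈ (fun z => infDist z Dᶜ) '' F'' := ⟨z₀, hz₀F, rfl⟩
          have hbdd : BddBelow ((fun z => infDist z Dᶜ) '' F'') := by
            refine ⟨0, ?_⟩
            rintro _ ⟨z, _, rfl⟩
            exact infDist_nonneg
          have := (csInf_le hbdd hmemI).trans hz₀le
          linarith
      _ = s := by ring
  -- bounds on η and its derivatives
  obtain ⟨M0, hM0nn, hM0⟩ := aux_bdd hη.continuous hηsupp
  have hf'cd : ContDiff ℝ 1 (fderiv ℝ η) := hη.fderiv_right (by norm_num)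
  have hf'supp : HasCompactSupport (fderiv ℝ η) := hηsupp.fderiv (𝕜 := ℝ)
  obtain ⟨M2, hM2nn, hM2⟩ := aux_bdd (hf'cd.continuous_fderiv one_ne_zero) (hf'supp.fderiv (𝕜 := ℝ))
  have hlip : LipschitzWith M2.toNNReal (fderiv ℝ η) := by
    refine lipschitzWith_of_nnnorm_fderiv_le (𝕜 := ℝ) (hf'cd.differentiable one_ne_zero) fun x => ?_
    rw [← norm_toNNReal]
    exact Real.toNNReal_le_toNNReal (hM2 x)
  -- Taylor estimate
  have htaylor : ∀ x y : E, |η (x + y) - η x - fderiv ℝ η x y| ≤ M2 * ‖y‖ ^ 2 := by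
    intro x y
    have hd : ∀ z ∈ closedBall x ‖y‖, DifferentiableAt ℝ η z :=
      fun z _ => (hη.differentiable (by norm_num)).differentiableAt
    have hb : ∀ z ∈ closedBall x ‖y‖, ‖fderiv ℝ η z - fderiv ℝ η x‖ ≤ M2 * ‖y‖ := by
      intro z hz
      have := hlip.dist_le_mul z x
      rw [dist_eq_norm, dist_eq_norm] at this
      calc ‖fderiv ℝ η z - fderiv ℝ η x‖ ≤ M2.toNNReal * ‖z - x‖ := this
        _ ≤ M2 * ‖y‖ := by
            rw [Real.coe_toNNReal _ hM2nn]
            exact mul_le_mul_of_nonneg_left (by simpa [dist_eq_norm] using hz) hM2nn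
    have hconv : Convex ℝ (closedBall x ‖y‖) := convex_closedBall _ _
    have hx : x ∈ closedBall x ‖y‖ := mem_closedBall_self (norm_nonneg _)
    have hxy : x + y ∈ closedBall x ‖y‖ := by
      simp [mem_closedBall, dist_eq_norm]
    have := hconv.norm_image_sub_le_of_norm_fderiv_le' hd hb hx hxy
    rw [add_sub_cancel_left] at this
    calc |η (x + y) - η x - fderiv ℝ η x y| ≤ M2 * ‖y‖ * ‖y‖ := by
          simpa [Real.norm_eq_abs] using this
      _ = M2 * ‖y‖ ^ 2 := by ring
  -- gradient facts
  have hgrad : ∀ (x y : E), inner (𝕜 := ℝ) y (gradient η x) = fderiv ℝ η x y := by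
    intro x y
    rw [real_inner_comm]
    exact InnerProductSpace.toDual_symm_apply
  have hgradc : Continuous fun x => gradient η x :=
    (InnerProductSpace.toDual ℝ E).symm.continuous.comp hf'cd.continuous
  have hgradsupp : HasCompactSupport fun x => gradient η x :=
    hf'supp.comp_left (map_zero _)
  obtain ⟨M1, hM1nn, hM1⟩ := aux_bdd hgradc hgradsupp
  have hgrad0 : ∀ x, x ∉ tsupport η → gradient η x = 0 := by
    intro x hx
    have : fderiv ℝ η x = 0 :=
      image_eq_zero_of_notMem_tsupport fun h => hx (tsupport_fderiv_subset ℝ h)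
    rw [gradient, this, map_zero]
  -- the three pieces of the operator
  set g1 : E → ℝ := fun x => (1 / 2) * ∑ i, ∑ k, Q i k *
      fderiv ℝ (fun z => fderiv ℝ η z (EuclideanSpace.single k 1)) x (EuclideanSpace.single i 1)
    with hg1def
  set g2 : E → ℝ := fun x => inner (𝕜 := ℝ) l (gradient η x) with hg2def
  set ig : E → E → ℝ := fun x y => η (x + y) - η x -
      (if y ∈ Metric.ball (0 : EuclideanSpace ℝ (Fin d)) 1 then
        inner (𝕜 := ℝ) y (gradient η x) else 0) with higdef
  have hdecomp : ∀ x, levyOp Q l ν η x = g1 x - g2 x + ∫ y, ig x y ∂ν := fun x => rfl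
  -- second-derivative entries: smoothness and support
  have hψcd : ∀ v : E, ContDiff ℝ 1 (fun z => fderiv ℝ η z v) := by
    intro v
    exact (ContinuousLinearMap.apply ℝ ℝ v).contDiff.comp hf'cd
  have hψsupp0 : ∀ (v : E) (x : E), x ∉ tsupport η →
      fderiv ℝ (fun z => fderiv ℝ η z v) x = 0 := by
    intro v x hx
    refine image_eq_zero_of_notMem_tsupport fun h => hx ?_
    have h1 : tsupport (fderiv ℝ fun z => fderiv ℝ η z v) ⊆
        tsupport fun z => fderiv ℝ η z v := tsupport_fderiv_subset ℝ
    have h2 : tsupport (fun z => fderiv ℝ η z v) ⊆ tsupport (fderiv ℝ η) := by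
      apply closure_mono
      intro z hz
      simp only [Function.mem_support] at hz ⊢
      intro h0
      exact hz (by rw [h0]; rfl)
    exact tsupport_fderiv_subset ℝ (h2 (h1 h))
  have hg1c : Continuous g1 := by
    refine continuous_const.mul (continuous_finset_sum _ fun i _ =>
      continuous_finset_sum _ fun k _ => continuous_const.mul ?_)
    exact ((hψcd _).continuous_fderiv one_ne_zero).clm_apply continuous_const
  have hg1zero : ∀ x, x ∉ tsupport η → g1 x = 0 := by
    intro x hx
    simp only [hg1def]
    rw [Finset.sum_eq_zero, mul_zero]
    intro i _
    rw [Finset.sum_eq_zero]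
    intro k _
    rw [hψsupp0 _ x hx]
    simp
  have hg2c : Continuous g2 := continuous_const.inner hgradc
  have hg2zero : ∀ x, x ∉ tsupport η → g2 x = 0 := by
    intro x hx
    simp only [hg2def, hgrad0 x hx, inner_zero_right]
  obtain ⟨C1, hC1⟩ := hF''c.exists_bound_of_continuousOn hg1c.continuousOn
  obtain ⟨C2, hC2⟩ := hF''c.exists_bound_of_continuousOn hg2c.continuousOn
  -- global bound on the integrand of the jump part
  set m : ℝ := min 1 (s ^ 2) with hmdef
  have hmpos : 0 < m := lt_min one_pos (by positivity)
  set Cm : ℝ := max M2 ((2 * M0 + M1) / m) with hCmdef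
  have hCmnn : 0 ≤ Cm := le_trans hM2nn (le_max_left _ _)
  have hig : ∀ x y, |ig x y| ≤ Cm * min 1 (‖y‖ ^ 2) := by
    intro x y
    simp only [higdef]
    rcases lt_or_ge ‖y‖ s with hy | hy
    · have hy1 : ‖y‖ < 1 := lt_of_lt_of_le hy hs1
      have hmem : y ∈ Metric.ball (0 : E) 1 := mem_ball_zero_iff.mpr hy1
      rw [if_pos hmem, hgrad]
      have hmin : min 1 (‖y‖ ^ 2) = ‖y‖ ^ 2 :=
        min_eq_right (by nlinarith [norm_nonneg y])
      rw [hmin]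
      exact (htaylor x y).trans
        (mul_le_mul_of_nonneg_right (le_max_left _ _) (by positivity))
    · have hm : m ≤ min 1 (‖y‖ ^ 2) := min_le_min le_rfl (by nlinarith [norm_nonneg y])
      have habs : |η (x + y) - η x -
          (if y ∈ Metric.ball (0 : E) 1 then inner (𝕜 := ℝ) y (gradient η x) else 0)|
          ≤ 2 * M0 + M1 := by
        have h1 : |η (x + y)| ≤ M0 := by simpa [Real.norm_eq_abs] using hM0 (x + y)
        have h2 : |η x| ≤ M0 := by simpa [Real.norm_eq_abs] using hM0 x
        have h3 : |if y ∈ Metric.ball (0 : E) 1 then inner (𝕜 := ℝ) y (gradient η x) else 0|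
            ≤ M1 := by
          split_ifs with h
          · calc |inner (𝕜 := ℝ) y (gradient η x)| ≤ ‖y‖ * ‖gradient η x‖ :=
                abs_real_inner_le_norm _ _
              _ ≤ 1 * M1 := by
                  refine mul_le_mul (le_of_lt (mem_ball_zero_iff.mp h)) (hM1 x)
                    (norm_nonneg _) zero_le_one
              _ = M1 := one_mul _
          · simpa using hM1nn
        calc |η (x + y) - η x - _| ≤ |η (x + y) - η x| + _ := abs_sub _ _
          _ ≤ (|η (x + y)| + |η x|) + _ := by gcongr; exact abs_sub _ _
          _ ≤ 2 * M0 + M1 := by linarith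
      calc |η (x + y) - η x - _| ≤ 2 * M0 + M1 := habs
        _ = ((2 * M0 + M1) / m) * m := by field_simp
        _ ≤ Cm * min 1 (‖y‖ ^ 2) := by
            refine mul_le_mul (le_max_right _ _) hm hmpos.le hCmnn
  set I : ℝ≥0∞ := ∫⁻ y, ENNReal.ofReal (min 1 (‖y‖ ^ 2)) ∂ν with hIdef
  have hT3 : ∀ x, (‖∫ y, ig x y ∂ν‖₊ : ℝ≥0∞) ≤ ENNReal.ofReal Cm * I := by
    intro x
    refine le_trans (enorm_integral_le_lintegral_enorm _) ?_
    rw [hIdef, ← lintegral_const_mul' _ _ ENNReal.ofReal_ne_top]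
    refine lintegral_mono fun y => ?_
    rw [Real.enorm_eq_ofReal_abs]
    calc ENNReal.ofReal |ig x y| ≤ ENNReal.ofReal (Cm * min 1 (‖y‖ ^ 2)) :=
        ENNReal.ofReal_le_ofReal (hig x y)
      _ = ENNReal.ofReal Cm * ENNReal.ofReal (min 1 (‖y‖ ^ 2)) := ENNReal.ofReal_mul hCmnn
  set Cbig : ℝ≥0∞ := ENNReal.ofReal C1 + ENNReal.ofReal C2 + ENNReal.ofReal Cm * I
    with hCbigdef
  have hCbig_ne_top : Cbig ≠ ⊤ := by
    simp only [hCbigdef]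
    refine ENNReal.add_ne_top.mpr ⟨ENNReal.add_ne_top.mpr
      ⟨ENNReal.ofReal_ne_top, ENNReal.ofReal_ne_top⟩, ?_⟩
    exact ENNReal.mul_ne_top ENNReal.ofReal_ne_top hνint
  -- the pointwise bound
  have hclaim : ∀ x, (‖levyOp Q l ν η x‖₊ : ℝ≥0∞) ≤
      Cbig * F''.indicator 1 x + ENNReal.ofReal M0 * ENNReal.ofReal (rhoF ν D F'' x) := by
    intro x
    by_cases hx : x ∈ F''
    · refine le_trans ?_ (le_add_of_nonneg_right (by positivity))
      rw [indicator_of_mem hx, Pi.one_apply, mul_one, hdecomp x]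
      calc (‖g1 x - g2 x + ∫ y, ig x y ∂ν‖₊ : ℝ≥0∞)
          ≤ (‖g1 x‖₊ : ℝ≥0∞) + (‖g2 x‖₊ : ℝ≥0∞) + (‖∫ y, ig x y ∂ν‖₊ : ℝ≥0∞) := by
            refine le_trans (ENNReal.coe_le_coe.mpr (nnnorm_add_le _ _)) ?_
            push_cast
            exact add_le_add (ENNReal.coe_le_coe.mpr (nnnorm_sub_le _ _)) le_rfl
        _ ≤ ENNReal.ofReal C1 + ENNReal.ofReal C2 + ENNReal.ofReal Cm * I := by
            refine add_le_add (add_le_add ?_ ?_) (hT3 x)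
            · rw [← enorm_eq_nnnorm, ← ofReal_norm]
              exact ENNReal.ofReal_le_ofReal (hC1 x hx)
            · rw [← enorm_eq_nnnorm, ← ofReal_norm]
              exact ENNReal.ofReal_le_ofReal (hC2 x hx)
    · have hxF : x ∉ tsupport η := fun h => hx (hFF'' h)
      have hηx : η x = 0 := image_eq_zero_of_notMem_tsupport hxF
      have higx : ∀ y, ig x y = η (x + y) := by
        intro y
        simp [higdef, hηx, hgrad0 x hxF,
          (show fderiv ℝ η x = 0 from image_eq_zero_of_notMem_tsupport fun h => hxF (tsupport_fderiv_subset ℝ h))]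
      rw [indicator_of_notMem hx, mul_zero, zero_add, hdecomp x,
        hg1zero x hxF, hg2zero x hxF]
      simp only [sub_zero, zero_sub, neg_add_eq_sub, sub_self, zero_add]
      set img : Set E := (fun z => z - x) '' F'' with himgdef
      have himgmeas : MeasurableSet img :=
        (hF''c.image (continuous_id.sub continuous_const)).isClosed.measurableSet
      have hsetmeas : MeasurableSet ((Metric.ball (0 : E) s)ᶜ ∩ img) :=
        (isOpen_ball.isClosed_compl.measurableSet).inter himgmeas
      calc (‖∫ y, ig x y ∂ν‖₊ : ℝ≥0∞) ≤ ∫⁻ y, (‖ig x y‖₊ : ℝ≥0∞) ∂ν :=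
          enorm_integral_le_lintegral_enorm _
        _ ≤ ∫⁻ y, ((Metric.ball (0 : E) s)ᶜ ∩ img).indicator
              (fun _ => ENNReal.ofReal M0) y ∂ν := by
            refine lintegral_mono fun y => ?_
            rw [higx y]
            by_cases hxy : x + y ∈ tsupport η
            · have hymem : y ∈ (Metric.ball (0 : E) s)ᶜ ∩ img := by
                constructor
                · intro hball
                  refine hx (Or.inl ?_)
                  rw [hF'def]
                  refine thickening_subset_cthickening _ _ ?_
                  rw [mem_thickening_iff]
                  exact ⟨x + y, hxy, by
                    rw [dist_self_add_right]
                    exact mem_ball_zero_iff.mp hball⟩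
                · exact ⟨x + y, hFF'' hxy, add_sub_cancel_left x y⟩
              rw [indicator_of_mem hymem, ← enorm_eq_nnnorm, Real.enorm_eq_ofReal_abs]
              exact ENNReal.ofReal_le_ofReal (by simpa [Real.norm_eq_abs] using hM0 (x + y))
            · rw [image_eq_zero_of_notMem_tsupport hxy]
              simp
        _ = ENNReal.ofReal M0 * ν ((Metric.ball (0 : E) s)ᶜ ∩ img) :=
            lintegral_indicator_const hsetmeas _
        _ ≤ ENNReal.ofReal M0 * ENNReal.ofReal (rhoF ν D F'' x) := by
            refine mul_le_mul_right ?_ _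
            have hsub : (Metric.ball (0 : E) s)ᶜ ∩ img ⊆
                (Metric.ball (0 : E) (rF D F''))ᶜ ∩ img :=
              inter_subset_inter_left _ (compl_subset_compl.mpr (ball_subset_ball hrle))
            have htpos : 0 < infDist x F'' :=
              (hF''closed.notMem_iff_infDist_pos hF''ne).mp hx
            have hfin : ν ((Metric.ball (0 : E) (rF D F''))ᶜ ∩ img) ≠ ⊤ := by
              refine (lt_of_le_of_lt (measure_mono ?_) (aux_nufin ν hνint htpos)).ne
              intro y hy
              obtain ⟨z, hz, rfl⟩ := hy.2
              simp only [mem_compl_iff, mem_ball_zero_iff, not_lt]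
              calc infDist x F'' ≤ dist x z := infDist_le_dist_of_mem hz
                _ = ‖z - x‖ := by rw [dist_eq_norm, norm_sub_rev]
            calc ν ((Metric.ball (0 : E) s)ᶜ ∩ img) ≤
                ν ((Metric.ball (0 : E) (rF D F''))ᶜ ∩ img) := measure_mono hsub
              _ = ENNReal.ofReal ((ν ((Metric.ball (0 : E) (rF D F''))ᶜ ∩ img)).toReal) :=
                  (ENNReal.ofReal_toReal hfin).symm
              _ ≤ ENNReal.ofReal (rhoF ν D F'' x) := by
                  refine ENNReal.ofReal_le_ofReal ?_
                  rw [rhoF, himgdef]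
                  exact le_add_of_nonneg_right ENNReal.toReal_nonneg
  -- assemble
  have hmeas1 : Measurable fun x => (‖u x‖₊ : ℝ≥0∞) * (Cbig * F''.indicator 1 x) :=
    (humeas.nnnorm.coe_nnreal_ennreal).mul
      (measurable_const.mul (measurable_one.indicator hF''meas))
  calc ∫⁻ x, (‖u x‖₊ : ℝ≥0∞) * (‖levyOp Q l ν η x‖₊ : ℝ≥0∞)
      ≤ ∫⁻ x, ((‖u x‖₊ : ℝ≥0∞) * (Cbig * F''.indicator 1 x) +
          (‖u x‖₊ : ℝ≥0∞) * (ENNReal.ofReal M0 * ENNReal.ofReal (rhoF ν D F'' x))) := by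
        refine lintegral_mono fun x => ?_
        rw [← mul_add]
        exact mul_le_mul_right (hclaim x) _
    _ = (∫⁻ x, (‖u x‖₊ : ℝ≥0∞) * (Cbig * F''.indicator 1 x)) +
        ∫⁻ x, (‖u x‖₊ : ℝ≥0∞) * (ENNReal.ofReal M0 * ENNReal.ofReal (rhoF ν D F'' x)) :=
        lintegral_add_left hmeas1 _
    _ < ⊤ := by
        refine ENNReal.add_lt_top.mpr ⟨?_, ?_⟩
        · have heq : ∀ x, (‖u x‖₊ : ℝ≥0∞) * (Cbig * F''.indicator 1 x) =
              F''.indicator (fun x => Cbig * (‖u x‖₊ : ℝ≥0∞)) x := by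
            intro x
            by_cases hx : x ∈ F''
            · simp [indicator_of_mem hx, mul_comm, mul_left_comm]
            · simp [indicator_of_notMem hx]
          rw [lintegral_congr heq, lintegral_indicator hF''meas,
            lintegral_const_mul' _ _ hCbig_ne_top]
          have hint : IntegrableOn u F'' :=
            huloc.integrableOn_compact_subset hF''D hF''c
          exact ENNReal.mul_lt_top (lt_top_iff_ne_top.mpr hCbig_ne_top) hint.2
        · have heq : ∀ x, (‖u x‖₊ : ℝ≥0∞) *
              (ENNReal.ofReal M0 * ENNReal.ofReal (rhoF ν D F'' x)) =
              ENNReal.ofReal M0 * ENNReal.ofReal (|u x| * rhoF ν D F'' x) := by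
            intro x
            rw [← enorm_eq_nnnorm, Real.enorm_eq_ofReal_abs, ENNReal.ofReal_mul (abs_nonneg _)]
            ring
          rw [lintegral_congr heq, lintegral_const_mul' _ _ ENNReal.ofReal_ne_top]
          refine ENNReal.mul_lt_top (by simp [ENNReal.ofReal_lt_top]) ?_
          have hfin : ∫⁻ x, (‖|u x| * rhoF ν D F'' x‖₊ : ℝ≥0∞) < ⊤ :=
            (huT F'' hF''c hF''D).2
          refine lt_of_le_of_lt (lintegral_mono fun x => ?_) hfin
          exact Real.ofReal_le_enorm _
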